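/- Let R be a unital ring and e_1, …, e_n pairwise orthogonal primitive idempotents of R such that every nonzero indecomposable finitely generated projective left R-module is isomorphic to Re_j for some 1 ≤ j ≤ n. Let P be a partially invertible R-bimodule and fix 1 ≤ i ≤ n. Then either Pe_i = 0 or Pe_i is isomorphic, as a left R-module, to Re_j for some 1 ≤ j ≤ n; here Pe_i = {x e_i : x ∈ P}, a left R-submodule of P. -/

import Mathlib

/-- A partially invertible bimodule: finitely generated projective on both sides,
with the two regular representations `l : S → End(P_S)` and `r : S → End(_S P)`
surjective. -/
def PartiallyInvertible (S : Type*) [Ring S] (P : Type*) [AddCommGroup P]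
    [Module S P] [Module Sᵐᵒᵖ P] [SMulCommClass S Sᵐᵒᵖ P] : Prop :=
  Module.Finite S P ∧ Module.Projective S P ∧
    Module.Finite Sᵐᵒᵖ P ∧ Module.Projective Sᵐᵒᵖ P ∧
    (∀ f : P →ₗ[Sᵐᵒᵖ] P, ∃ s : S, ∀ x : P, f x = s • x) ∧
    (∀ f : P →ₗ[S] P, ∃ s : S, ∀ x : P, f x = MulOpposite.op s • x)

/-- A primitive idempotent of a ring: a nonzero idempotent which is not the sum of
two nonzero orthogonal idempotents. -/
def IsPrimitiveIdempotent {S : Type*} [Ring S] (e : S) : Prop :=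
  IsIdempotentElem e ∧ e ≠ 0 ∧
    ¬∃ a b : S, IsIdempotentElem a ∧ IsIdempotentElem b ∧ a ≠ 0 ∧ b ≠ 0 ∧
      a * b = 0 ∧ b * a = 0 ∧ e = a + b

variable {R : Type*} [Ring R]

/-- `R x = {r x : r ∈ R}` as a left `R`-submodule (left ideal) of `R`. -/
def leftMulIdeal (x : R) : Submodule R R where
  carrier := Set.range (fun r : R => r * x)
  zero_mem' := ⟨0, zero_mul x⟩
  add_mem' := by
    rintro a b ⟨r, rfl⟩ ⟨s, rfl⟩
    exact ⟨r + s, add_mul r s x⟩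
  smul_mem' := by
    rintro c y ⟨r, rfl⟩
    exact ⟨c * r, by simp [smul_eq_mul, mul_assoc]⟩

/-- `P x = {p x : p ∈ P}` as a left `R`-submodule of the `R`-bimodule `P`. -/
def rightMulRange (P : Type*) [AddCommGroup P] [Module R P] [Module Rᵐᵒᵖ P]
    [SMulCommClass R Rᵐᵒᵖ P] (x : R) : Submodule R P where
  carrier := Set.range (fun p : P => MulOpposite.op x • p)
  zero_mem' := ⟨0, smul_zero _⟩
  add_mem' := by
    rintro a b ⟨p, rfl⟩ ⟨q, rfl⟩
    exact ⟨p + q, smul_add _ p q⟩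
  smul_mem' := by
    rintro c y ⟨p, rfl⟩
    exact ⟨c • p, (smul_comm c (MulOpposite.op x) p).symm⟩

universe u

------------------------------------------------------------------------------
section AuxPI

open MulOpposite

variable (S : Type*) [Ring S] (P : Type*) [AddCommGroup P] [Module S P]
  [Module Sᵐᵒᵖ P] [SMulCommClass S Sᵐᵒᵖ P]

private def rOpAux (s : Sᵐᵒᵖ) : P →ₗ[S] P where
  toFun x := s • x
  map_add' := smul_add s
  map_smul' r x := (smul_comm r s x).symm

private def rMapAux : Sᵐᵒᵖ →ₗ[Sᵐᵒᵖ] (P →ₗ[S] P) where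
  toFun := rOpAux S P
  map_add' s t := by ext x; simp [rOpAux, add_smul]
  map_smul' s t := by ext x; simp [rOpAux, mul_smul]

@[simp] private lemma rMapAux_apply (s : Sᵐᵒᵖ) (x : P) : rMapAux S P s x = s • x := rfl

private theorem exists_section_aux (hfin : Module.Finite S P) (hproj : Module.Projective S P)
    (hopproj : Module.Projective Sᵐᵒᵖ P) (hsurj : Function.Surjective (rMapAux S P)) :
    ∃ σ : (P →ₗ[S] P) →ₗ[Sᵐᵒᵖ] Sᵐᵒᵖ, ∀ f, rMapAux S P (σ f) = f := by
  classical
  haveI := hfin; haveI := hproj; haveI := hopproj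
  obtain ⟨k, π, hπ⟩ := Module.Finite.exists_fin' S P
  obtain ⟨ι, hι⟩ := Module.projective_lifting_property π LinearMap.id hπ
  let Φ : (P →ₗ[S] P) →ₗ[Sᵐᵒᵖ] ((Fin k → S) →ₗ[S] P) :=
    { toFun := fun f => f ∘ₗ π
      map_add' := fun f g => LinearMap.add_comp _ _ _
      map_smul' := fun s f => LinearMap.smul_comp _ _ _ }
  let Ψ : ((Fin k → S) →ₗ[S] P) →ₗ[Sᵐᵒᵖ] (P →ₗ[S] P) :=
    { toFun := fun g => g ∘ₗ ι
      map_add' := fun f g => LinearMap.add_comp _ _ _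
      map_smul' := fun s f => LinearMap.smul_comp _ _ _ }
  let ρ : ((Fin k → S) →ₗ[S] P) ≃ₗ[Sᵐᵒᵖ] (Fin k → P) := LinearEquiv.piRing S P (Fin k) Sᵐᵒᵖ
  have hlift : ∀ j : Fin k, ∃ h : P →ₗ[Sᵐᵒᵖ] Sᵐᵒᵖ,
      (rMapAux S P) ∘ₗ h =
        Ψ ∘ₗ ρ.symm.toLinearMap ∘ₗ LinearMap.single Sᵐᵒᵖ (fun _ : Fin k => P) j :=
    fun j => Module.projective_lifting_property _ _ hsurj
  choose h hh using hlift
  let H : (Fin k → P) →ₗ[Sᵐᵒᵖ] Sᵐᵒᵖ := ∑ j : Fin k, (h j) ∘ₗ LinearMap.proj j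
  have hH : ∀ x : Fin k → P, rMapAux S P (H x) = Ψ (ρ.symm x) := by
    intro x
    have h1 : H x = ∑ j : Fin k, h j (x j) := by
      simp [H, LinearMap.sum_apply]
    rw [h1, map_sum]
    have h2 : ∀ j : Fin k, rMapAux S P (h j (x j)) = Ψ (ρ.symm (Pi.single j (x j))) := by
      intro j
      have := DFunLike.congr_fun (hh j) (x j)
      simpa using this
    rw [Finset.sum_congr rfl fun j _ => h2 j]
    have h3 : (∑ j : Fin k, Pi.single j (x j)) = x := by
      funext l
      rw [Finset.sum_apply]
      exact Fintype.sum_pi_single l x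
    conv_rhs => rw [← h3]
    rw [map_sum, map_sum]
  refine ⟨H ∘ₗ ρ.toLinearMap ∘ₗ Φ, fun f => ?_⟩
  rw [LinearMap.comp_apply, LinearMap.comp_apply, hH]
  simp only [LinearEquiv.coe_coe, LinearEquiv.symm_apply_apply]
  show (f ∘ₗ π) ∘ₗ ι = f
  rw [LinearMap.comp_assoc, hι, LinearMap.comp_id]

end AuxPI

------------------------------------------------------------------------------
private lemma ring_decomp {R : Type*} [Ring R] {K : R → Prop}
    (Kadd : ∀ {s t : R}, K s → K t → K (s + t))
    (Ksub : ∀ {s t : R}, K s → K t → K (s - t))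
    (Kmull : ∀ (t : R) {s : R}, K s → K (t * s))
    (Kmulr : ∀ (t : R) {s : R}, K s → K (s * t))
    {c u a : R} (hc : c * c = c)
    (hKu : K u) (hcu : c * u = u) (huc : u * c = u) (huu : u * u = u)
    (hulem : ∀ y, K y → c * y = y → u * y = y)
    (hca : c * a = a) (hac : a * c = a)
    (hKaa : K (a * a - a)) :
    ∃ x₁ x₂ : R, x₁ * x₁ = x₁ ∧ x₂ * x₂ = x₂ ∧ x₁ * x₂ = 0 ∧ x₂ * x₁ = 0 ∧
      c = x₁ + x₂ ∧ K (x₁ - a) ∧ K (x₂ - (c - a)) := by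
  have hc' : ∀ x : R, c * (c * x) = c * x := fun x => by rw [← mul_assoc, hc]
  have hcu' : ∀ x : R, c * (u * x) = u * x := fun x => by rw [← mul_assoc, hcu]
  have huc' : ∀ x : R, u * (c * x) = u * x := fun x => by rw [← mul_assoc, huc]
  have huu' : ∀ x : R, u * (u * x) = u * x := fun x => by rw [← mul_assoc, huu]
  have hca' : ∀ x : R, c * (a * x) = a * x := fun x => by rw [← mul_assoc, hca]
  have hac' : ∀ x : R, a * (c * x) = a * x := fun x => by rw [← mul_assoc, hac]
  set A : R := a - a * u - u * a + u * a * u with hA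
  set D : R := a * a - a with hD
  set E : R := a * u * a with hE
  have hKE : K E := Kmulr a (Kmull a hKu)
  have hDa : u * D = D := by
    refine hulem D hKaa ?_
    rw [hD, mul_sub, ← mul_assoc, hca]
  have hEa : u * E = E := by
    refine hulem E hKE ?_
    rw [hE, ← mul_assoc, ← mul_assoc, hca]
  have hx1 : (u + A) * (u + A) =
      (u + A) + ((D - u * D) - (D - u * D) * u) - ((E - u * E) - (E - u * E) * u) := by
    rw [hA, hD, hE]
    simp only [mul_sub, sub_mul, mul_add, add_mul, mul_assoc, hc, hc', hcu, hcu', huc, huc',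
      huu, huu', hca, hca', hac, hac']
    abel
  have hx2 : (c - u - A) * (c - u - A) =
      (c - u - A) + ((D - u * D) - (D - u * D) * u) - ((E - u * E) - (E - u * E) * u) := by
    rw [hA, hD, hE]
    simp only [mul_sub, sub_mul, mul_add, add_mul, mul_assoc, hc, hc', hcu, hcu', huc, huc',
      huu, huu', hca, hca', hac, hac']
    abel
  have hx12 : (u + A) * (c - u - A) =
      ((E - u * E) - (E - u * E) * u) - ((D - u * D) - (D - u * D) * u) := by
    rw [hA, hD, hE]
    simp only [mul_sub, sub_mul, mul_add, add_mul, mul_assoc, hc, hc', hcu, hcu', huc, huc',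
      huu, huu', hca, hca', hac, hac']
    abel
  have hx21 : (c - u - A) * (u + A) =
      ((E - u * E) - (E - u * E) * u) - ((D - u * D) - (D - u * D) * u) := by
    rw [hA, hD, hE]
    simp only [mul_sub, sub_mul, mul_add, add_mul, mul_assoc, hc, hc', hcu, hcu', huc, huc',
      huu, huu', hca, hca', hac, hac']
    abel
  rw [hDa, hEa] at hx1 hx2 hx12 hx21
  simp only [sub_self, zero_mul, sub_zero, add_zero] at hx1 hx2 hx12 hx21
  refine ⟨u + A, c - u - A, hx1, hx2, hx12, hx21, by abel, ?_, ?_⟩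
  · have h1 : (u + A) - a = ((u - a * u) - u * a) + u * a * u := by rw [hA]; abel
    rw [h1]
    exact Kadd (Ksub (Ksub hKu (Kmull a hKu)) (Kmulr a hKu)) (Kmulr u (Kmulr a hKu))
  · have h2 : (c - u - A) - (c - a) = ((a * u - u) + u * a) - u * a * u := by rw [hA]; abel
    rw [h2]
    exact Ksub (Kadd (Ksub (Kmull a hKu) hKu) (Kmulr a hKu)) (Kmulr u (Kmulr a hKu))

------------------------------------------------------------------------------
open MulOpposite in
private lemma exists_f {R : Type*} [Ring R] {P : Type*} [AddCommGroup P] [Module R P]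
    [Module Rᵐᵒᵖ P] [SMulCommClass R Rᵐᵒᵖ P] {c : R} (hc : c * c = c)
    {W W' : Submodule R ↥(rightMulRange P c)} (hcmp : IsCompl W W')
    (hW : W ≠ ⊥) (hW' : W' ≠ ⊥) :
    ∃ (f : P →ₗ[R] P) (w w' : P), w ≠ 0 ∧ w' ≠ 0 ∧
      (∀ x, f (f x) = f x) ∧ (∀ x, f (op c • x) = f x) ∧
      (∀ x, op c • f x = f x) ∧ f w = w ∧ f w' = 0 ∧
      op c • w = w ∧ op c • w' = w' := by
  classical
  have hmem : ∀ x : P, op c • x ∈ rightMulRange P c := fun x => ⟨x, rfl⟩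
  have hMfix : ∀ m, m ∈ rightMulRange P c → op c • m = m := by
    intro m hm
    obtain ⟨p, hp⟩ := hm
    rw [← hp, smul_smul, ← op_mul, hc]
  let q : P →ₗ[R] P :=
    { toFun := fun x => op c • x
      map_add' := fun x y => smul_add _ x y
      map_smul' := fun r x => (smul_comm r (op c) x).symm }
  let qM : P →ₗ[R] ↥(rightMulRange P c) := LinearMap.codRestrict _ q hmem
  have hqMM : ∀ m : ↥(rightMulRange P c), qM (m : P) = m := fun m => Subtype.ext (hMfix m m.2)
  let prW := W.linearProjOfIsCompl W' hcmp
  let f : P →ₗ[R] P :=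
    { toFun := fun x => ((prW (qM x) : ↥(rightMulRange P c)) : P)
      map_add' := fun x y => by simp only [map_add]; rfl
      map_smul' := fun r x => by simp only [map_smul, RingHom.id_apply]; rfl }
  have hfx : ∀ x : P, f x = ((prW (qM x) : ↥(rightMulRange P c)) : P) := fun _ => rfl
  have hfM : ∀ x : P, f x ∈ rightMulRange P c := fun x =>
    ((prW (qM x) : ↥(rightMulRange P c))).2
  have hcf : ∀ x : P, op c • f x = f x := fun x => hMfix _ (hfM x)
  have hfq : ∀ x : P, f (op c • x) = f x := by
    intro x
    have h1 : qM (op c • x) = qM x := Subtype.ext (hMfix _ (hmem x))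
    rw [hfx, hfx, h1]
  have hff : ∀ x : P, f (f x) = f x := by
    intro x
    have h2 : qM (f x) = ((prW (qM x) : ↥(rightMulRange P c))) := hqMM _
    rw [hfx (f x), h2, show prW (prW (qM x) : ↥(rightMulRange P c)) = prW (qM x) from
      Submodule.projectionOnto_apply_left hcmp (prW (qM x))]
    exact (hfx x).symm
  obtain ⟨w₀, hw₀W, hw₀ne⟩ := W.ne_bot_iff.mp hW
  obtain ⟨w₁, hw₁W, hw₁ne⟩ := W'.ne_bot_iff.mp hW'
  have hfw : f (w₀ : P) = (w₀ : P) := by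
    rw [hfx, hqMM w₀]
    have h4 : prW w₀ = ⟨w₀, hw₀W⟩ :=
      Submodule.linearProjOfIsCompl_apply_left hcmp (⟨w₀, hw₀W⟩ : W)
    rw [h4]
  have hfw' : f (w₁ : P) = 0 := by
    rw [hfx, hqMM w₁]
    have h5 : prW w₁ = 0 := Submodule.projectionOnto_apply_of_mem_right hcmp hw₁W
    rw [h5]
    simp
  refine ⟨f, (w₀ : P), (w₁ : P), ?_, ?_, hff, hfq, hcf, hfw, hfw',
    hMfix _ w₀.2, hMfix _ w₁.2⟩
  · intro h
    exact hw₀ne (Subtype.ext h)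
  · intro h
    exact hw₁ne (Subtype.ext h)

------------------------------------------------------------------------------


/-- Let `e₁, …, eₙ` be pairwise orthogonal primitive idempotents of
`R` such that every nonzero indecomposable finitely generated projective left
`R`-module is isomorphic to some `Re_j`.  If `P` is a partially invertible
`R`-bimodule, then for each `i` either `Pe_i = 0` or `Pe_i ≅ Re_j` as left
`R`-modules, for some `j`. -/
theorem rightMul_by_primitive_idempotent {R : Type u} [Ring R]
    (n : ℕ) (e : Fin n → R)
    (horth : ∀ i j : Fin n, i ≠ j → e i * e j = 0)
    (hprim : ∀ i : Fin n, IsPrimitiveIdempotent (e i))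
    (hcomplete : ∀ (M : Type u) [AddCommGroup M] [Module R M],
      Module.Finite R M → Module.Projective R M → Nontrivial M →
      (∀ W W' : Submodule R M, IsCompl W W' → W = ⊥ ∨ W' = ⊥) →
      ∃ j : Fin n, Nonempty (M ≃ₗ[R] ↥(leftMulIdeal (e j))))
    (P : Type u) [AddCommGroup P] [Module R P] [Module Rᵐᵒᵖ P]
    [SMulCommClass R Rᵐᵒᵖ P] (hP : PartiallyInvertible R P) (i : Fin n) :
    rightMulRange P (e i) = ⊥ ∨
      ∃ j : Fin n, Nonempty (↥(rightMulRange P (e i)) ≃ₗ[R] ↥(leftMulIdeal (e j))) := by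
  classical
  obtain ⟨hfin, hproj, hopfin, hopproj, hl, hr⟩ := hP
  by_cases hbot : rightMulRange P (e i) = ⊥
  · exact Or.inl hbot
  right
  have hc : e i * e i = e i := (hprim i).1
  -- basic facts about M = P·(e i)
  have hmem : ∀ x : P, MulOpposite.op (e i) • x ∈ rightMulRange P (e i) := fun x => ⟨x, rfl⟩
  have hMfix : ∀ m, m ∈ rightMulRange P (e i) → MulOpposite.op (e i) • m = m := by
    intro m hm
    obtain ⟨p, hp⟩ := hm
    rw [← hp, smul_smul, ← MulOpposite.op_mul, hc]
  let q : P →ₗ[R] P :=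
    { toFun := fun x => MulOpposite.op (e i) • x
      map_add' := fun x y => smul_add _ x y
      map_smul' := fun r x => (smul_comm r (MulOpposite.op (e i)) x).symm }
  let qM : P →ₗ[R] ↥(rightMulRange P (e i)) := LinearMap.codRestrict _ q hmem
  have hqM_surj : Function.Surjective qM := by
    intro m
    obtain ⟨p, hp⟩ := m.2
    exact ⟨p, Subtype.ext hp⟩
  haveI := hfin; haveI := hproj; haveI := hopproj
  have hMfin : Module.Finite R ↥(rightMulRange P (e i)) :=
    Module.Finite.of_surjective qM hqM_surj
  have hMproj : Module.Projective R ↥(rightMulRange P (e i)) :=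
    Module.Projective.of_split (rightMulRange P (e i)).subtype qM
      (LinearMap.ext fun m => Subtype.ext (hMfix _ m.2))
  have hMnt : Nontrivial ↥(rightMulRange P (e i)) := Submodule.nontrivial_iff_ne_bot.mpr hbot
  -- the section of the right-multiplication representation
  have hsurj : Function.Surjective (rMapAux R P) := by
    intro f
    obtain ⟨s, hs⟩ := hr f
    exact ⟨MulOpposite.op s, (LinearMap.ext fun x => (hs x).symm)⟩
  obtain ⟨σ, hσ⟩ := exists_section_aux R P hfin hproj hopproj hsurj
  -- the annihilator predicate
  set K : R → Prop := fun s => ∀ x : P, MulOpposite.op s • x = 0 with hK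
  have Kadd : ∀ {s t : R}, K s → K t → K (s + t) := fun {s t} hs ht x => by
    rw [MulOpposite.op_add, add_smul, hs x, ht x, add_zero]
  have Ksub : ∀ {s t : R}, K s → K t → K (s - t) := fun {s t} hs ht x => by
    rw [MulOpposite.op_sub, sub_smul, hs x, ht x, sub_zero]
  have Kmull : ∀ (t : R) {s : R}, K s → K (t * s) := fun t {s} hs x => by
    rw [MulOpposite.op_mul, mul_smul]
    exact hs _
  have Kmulr : ∀ (t : R) {s : R}, K s → K (s * t) := fun t {s} hs x => by
    rw [MulOpposite.op_mul, mul_smul, hs x, smul_zero]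
  have Keval : ∀ {s t : R}, K (s - t) →
      ∀ x : P, MulOpposite.op s • x = MulOpposite.op t • x := by
    intro s t h x
    have h1 := h x
    rw [MulOpposite.op_sub, sub_smul] at h1
    exact sub_eq_zero.mp h1
  -- the corrector τ
  set τ : R → R := fun s => s - MulOpposite.unop (σ (rMapAux R P (MulOpposite.op s))) with hτ
  have hτK : ∀ s, K (τ s) := by
    intro s x
    show MulOpposite.op (s - MulOpposite.unop (σ (rMapAux R P (MulOpposite.op s)))) • x = 0
    rw [MulOpposite.op_sub, sub_smul, MulOpposite.op_unop]
    have h2 := DFunLike.congr_fun (hσ (rMapAux R P (MulOpposite.op s))) x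
    rw [rMapAux_apply, rMapAux_apply] at h2
    rw [h2, sub_self]
  have hτmul : ∀ s t : R, τ (s * t) = τ s * t := by
    intro s t
    show s * t - MulOpposite.unop (σ (rMapAux R P (MulOpposite.op (s * t)))) =
      (s - MulOpposite.unop (σ (rMapAux R P (MulOpposite.op s)))) * t
    rw [sub_mul]
    congr 1
    rw [MulOpposite.op_mul]
    have h3 : rMapAux R P (MulOpposite.op t * MulOpposite.op s) =
        MulOpposite.op t • rMapAux R P (MulOpposite.op s) := by
      rw [← smul_eq_mul, map_smul]
    rw [h3, map_smul, smul_eq_mul, MulOpposite.unop_mul, MulOpposite.unop_op]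
  have hτid : ∀ s, K s → τ s = s := by
    intro s hs
    show s - MulOpposite.unop (σ (rMapAux R P (MulOpposite.op s))) = s
    have h0 : rMapAux R P (MulOpposite.op s) = 0 := LinearMap.ext fun x => by
      rw [rMapAux_apply]
      exact hs x
    rw [h0, map_zero, MulOpposite.unop_zero, sub_zero]
  -- the idempotent generator u of the annihilator corner
  set u : R := e i * τ (e i) with hu
  have hKu : K u := Kmull (e i) (hτK (e i))
  have hτcc : τ (e i) * e i = τ (e i) := by rw [← hτmul, hc]
  have hcu : e i * u = u := by rw [hu, ← mul_assoc, hc]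
  have huc : u * e i = u := by rw [hu, mul_assoc, hτcc]
  have hulem : ∀ y, K y → e i * y = y → u * y = y := by
    intro y hy hcy
    rw [hu, mul_assoc, ← hτmul, hcy, hτid y hy]
    exact hcy
  have huu : u * u = u := by
    rw [hu, mul_assoc, ← hτmul, ← mul_assoc (e i) (e i) (τ (e i)), hc,
      hτid _ (Kmull (e i) (hτK (e i))), ← mul_assoc, hc]
  -- indecomposability
  have hindec : ∀ W W' : Submodule R ↥(rightMulRange P (e i)),
      IsCompl W W' → W = ⊥ ∨ W' = ⊥ := by
    intro W W' hcmp
    by_contra hn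
    push_neg at hn
    obtain ⟨f, w, w', hwne, hw'ne, hff, hfq, hcf, hfw, hfw', hcw, hcw'⟩ :=
      exists_f hc hcmp hn.1 hn.2
    obtain ⟨a0, ha0⟩ := hr f
    set a : R := e i * a0 * e i with ha'
    have hca : e i * a = a := by rw [ha', ← mul_assoc, ← mul_assoc, hc]
    have hac : a * e i = a := by rw [ha', mul_assoc, hc]
    have ha : ∀ x : P, MulOpposite.op a • x = f x := by
      intro x
      rw [ha', MulOpposite.op_mul, MulOpposite.op_mul, mul_smul, mul_smul, ← ha0, hfq]
      exact hcf x
    have hKaa : K (a * a - a) := by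
      intro x
      rw [MulOpposite.op_sub, sub_smul, MulOpposite.op_mul, mul_smul, ha, ha, hff, sub_self]
    obtain ⟨x₁, x₂, h1, h2, h12, h21, hsum, hK1, hK2⟩ :=
      ring_decomp Kadd Ksub Kmull Kmulr hc hKu hcu huc huu hulem hca hac hKaa
    have hx1w : MulOpposite.op x₁ • w = w := by
      rw [Keval hK1 w, ha, hfw]
    have hx1ne : x₁ ≠ 0 := by
      intro h0
      rw [h0, MulOpposite.op_zero, zero_smul] at hx1w
      exact hwne hx1w.symm
    have hx2w : MulOpposite.op x₂ • w' = w' := by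
      rw [Keval hK2 w', MulOpposite.op_sub, sub_smul, ha, hfw', hcw', sub_zero]
    have hx2ne : x₂ ≠ 0 := by
      intro h0
      rw [h0, MulOpposite.op_zero, zero_smul] at hx2w
      exact hw'ne hx2w.symm
    exact (hprim i).2.2 ⟨x₁, x₂, h1, h2, hx1ne, hx2ne, h12, h21, hsum⟩
  obtain ⟨j, hiso⟩ := hcomplete (↥(rightMulRange P (e i))) hMfin hMproj hMnt hindec
  exact ⟨j, hiso⟩
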